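/- arXiv:1405.5966 — 3 statements merged into one kernel-verified Lean document; each statement's English description precedes it below -/
import Mathlib

section
/- Invertible matrices A₁ = I_n, A₂, …, A_g in M_n(ℂ) are pairwise mutually orthogonal if and only if A_i is skew-Hermitian for all i ≥ 2 and A₂, …, A_g pairwise anticommute (A_iA_j + A_jA_i = 0 for 2 ≤ i ≠ j ≤ g). -/
open Matrix

/-- Invertible matrices `A 0 = 1, A 1, …` are pairwise mutually orthogonal iff
`A i` is skew-Hermitian for all `i ≠ 0` and the `A i`, `i ≠ 0`, pairwise anticommute. -/
theorem stmt_4 {n g : ℕ} (A : Fin g → Matrix (Fin n) (Fin n) ℂ) (i0 : Fin g)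
    (h0 : A i0 = 1) (hinv : ∀ i, IsUnit (A i)) :
    (∀ i j, i ≠ j → A i * (A j)ᴴ + A j * (A i)ᴴ = 0) ↔
      ((∀ i, i ≠ i0 → (A i)ᴴ = -(A i)) ∧
        (∀ i j, i ≠ i0 → j ≠ i0 → i ≠ j → A i * A j + A j * A i = 0)) := by
  constructor
  · intro h
    have hskew : ∀ i, i ≠ i0 → (A i)ᴴ = -(A i) := by
      intro i hi
      have := h i i0 hi
      rw [h0] at this
      simp only [conjTranspose_one, mul_one, one_mul] at this
      linear_combination (norm := noncomm_ring) this
    refine ⟨hskew, ?_⟩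
    intro i j hi hj hij
    have := h i j hij
    rw [hskew i hi, hskew j hj] at this
    linear_combination (norm := noncomm_ring) -this
  · rintro ⟨hskew, hanti⟩ i j hij
    by_cases hi : i = i0
    · have hj : j ≠ i0 := fun e => hij (hi.trans e.symm)
      rw [hi, h0, hskew j hj]
      simp
    · by_cases hj : j = i0
      · rw [hj, h0, hskew i hi]
        simp
      · rw [hskew i hi, hskew j hj]
        linear_combination (norm := noncomm_ring) -(hanti i j hi hj hij)
end

section
/- For matrices A_i, A_j ∈ M_n(ℂ): A_iA_j* + A_jA_i* = 0 if and only if Re(Tr((HA_i)(HA_j)*)) = 0 for all matrices H ∈ M_n(ℂ). -/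
open Matrix Complex

lemma aux_trace_self {n : ℕ} (C : Matrix (Fin n) (Fin n) ℂ)
    (h : Matrix.trace (Cᴴ * C) = 0) : C = 0 := by
  have key : Matrix.trace (Cᴴ * C) = ((∑ j, ∑ i, Complex.normSq (C i j) : ℝ) : ℂ) := by
    push_cast
    simp [Matrix.trace, Matrix.mul_apply, Matrix.conjTranspose_apply,
      ← Complex.normSq_eq_conj_mul_self]
  rw [key, Complex.ofReal_eq_zero] at h
  ext i j
  have hj : ∀ j ∈ Finset.univ, (0:ℝ) ≤ ∑ i, Complex.normSq (C i j) :=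
    fun j _ => Finset.sum_nonneg fun i _ => Complex.normSq_nonneg _
  have h1 := (Finset.sum_eq_zero_iff_of_nonneg hj).mp h j (Finset.mem_univ j)
  have hi : ∀ i ∈ Finset.univ, (0:ℝ) ≤ Complex.normSq (C i j) :=
    fun i _ => Complex.normSq_nonneg _
  have h2 := (Finset.sum_eq_zero_iff_of_nonneg hi).mp h1 i (Finset.mem_univ i)
  simpa [Complex.normSq_eq_zero] using h2

/-- `Aᵢ Aⱼᴴ + Aⱼ Aᵢᴴ = 0` iff `Re (Tr ((H Aᵢ)(H Aⱼ)ᴴ)) = 0` for all `H`. -/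
theorem stmt_7 {n : ℕ} (Ai Aj : Matrix (Fin n) (Fin n) ℂ) :
    Ai * Ajᴴ + Aj * Aiᴴ = 0 ↔
      ∀ H : Matrix (Fin n) (Fin n) ℂ,
        (Matrix.trace ((H * Ai) * (H * Aj)ᴴ)).re = 0 := by
  set B := Ai * Ajᴴ with hB
  have hBH : Bᴴ = Aj * Aiᴴ := by
    simp [hB, Matrix.conjTranspose_mul]
  have key : ∀ H : Matrix (Fin n) (Fin n) ℂ,
      Matrix.trace (H * (B + Bᴴ) * Hᴴ) =
        2 * (Matrix.trace ((H * Ai) * (H * Aj)ᴴ)).re := by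
    intro H
    have e1 : (H * Ai) * (H * Aj)ᴴ = H * B * Hᴴ := by
      simp [hB, Matrix.conjTranspose_mul, Matrix.mul_assoc]
    have e2 : H * Bᴴ * Hᴴ = ((H * Ai) * (H * Aj)ᴴ)ᴴ := by
      rw [hBH]
      simp [Matrix.conjTranspose_mul, Matrix.mul_assoc]
    have e3 : H * (B + Bᴴ) * Hᴴ = (H * Ai) * (H * Aj)ᴴ + ((H * Ai) * (H * Aj)ᴴ)ᴴ := by
      rw [← e2, e1]; noncomm_ring
    rw [e3, Matrix.trace_add, Matrix.trace_conjTranspose]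
    set z := Matrix.trace ((H * Ai) * (H * Aj)ᴴ)
    have := Complex.add_conj z
    simpa [mul_comm] using this
  constructor
  · intro h H
    have hz : B + Bᴴ = 0 := by rw [hBH, hB]; exact h
    have h0 := key H
    rw [hz] at h0
    simp only [Matrix.zero_mul, Matrix.mul_zero, Matrix.trace_zero] at h0
    have h1 : (((Matrix.trace ((H * Ai) * (H * Aj)ᴴ)).re : ℂ)) = 0 := by
      linear_combination -(1/2 : ℂ) * h0
    exact_mod_cast h1
  · intro h
    rw [← hBH]
    have hCzero : ∀ H : Matrix (Fin n) (Fin n) ℂ,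
        Matrix.trace (H * (B + Bᴴ) * Hᴴ) = 0 := by
      intro H
      rw [key H, h H]
      simp
    set C := B + Bᴴ with hC
    have hS : ∀ H K : Matrix (Fin n) (Fin n) ℂ,
        Matrix.trace (H * C * Kᴴ) + Matrix.trace (K * C * Hᴴ) = 0 := by
      intro H K
      have e : (H + K) * C * (H + K)ᴴ =
          H * C * Hᴴ + (H * C * Kᴴ + K * C * Hᴴ) + K * C * Kᴴ := by
        rw [Matrix.conjTranspose_add]; noncomm_ring
      have h0 := hCzero (H + K)
      rw [e] at h0
      simpa [Matrix.trace_add, hCzero H, hCzero K] using h0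
    have hS0 : ∀ H K : Matrix (Fin n) (Fin n) ℂ, Matrix.trace (H * C * Kᴴ) = 0 := by
      intro H K
      have h1 := hS H K
      have h2 := hS H ((Complex.I : ℂ) • K)
      rw [Matrix.conjTranspose_smul] at h2
      simp only [Matrix.smul_mul, Matrix.mul_smul, Matrix.trace_smul, smul_eq_mul,
        star_def, Complex.conj_I] at h2
      set t1 := Matrix.trace (H * C * Kᴴ)
      set t2 := Matrix.trace (K * C * Hᴴ)
      have h3 : Complex.I * t1 = Complex.I * t2 := by linear_combination -h2
      have ht : t1 = t2 := mul_left_cancel₀ Complex.I_ne_zero h3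
      linear_combination (1/2 : ℂ) * h1 + (1/2 : ℂ) * ht
    have h4 : Matrix.trace (Cᴴ * C) = 0 := by
      have := hS0 Cᴴ 1
      simpa using this
    exact aux_trace_self C h4
end

section
/- Suppose invertible matrices in M_n(ℂ) are partitioned into g ≥ 2 groups of sizes n₁, …, n_g such that matrices in different groups are pairwise mutually orthogonal. If the groups other than group 1 together contain at least n² matrices (n₂ + ⋯ + n_g ≥ n²), then n₂ + ⋯ + n_g = n² and n₁ = 1. -/
/-!
Fix a matrix `A₀` of the first group. Orthogonality to `A₀` makes `A₀⁻¹ B` skew-Hermitian for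
every `B` outside the first group, and these matrices are `ℝ`-linearly independent in the
`n²`-dimensional real space of skew-Hermitian matrices; so there are exactly `n²` of them and they
span that space. A second matrix `A'` of the first group would then make `M = A₀⁻¹ A'` orthogonal
to every skew-Hermitian `C`. Taking `C = i` gives `M = M*`, so `M` commutes with every
skew-Hermitian matrix, hence with every matrix: `M` is a real scalar, and `A'` a real multiple of
`A₀`, contradicting linear independence.
-/

open Matrix Module

section StarModule

variable (A : Type*) [AddCommGroup A] [StarAddMonoid A] [Module ℂ A] [StarModule ℂ A]

noncomputable def selfAdjointEquivSkewAdjoint : selfAdjoint A ≃ₗ[ℝ] skewAdjoint A where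
  toFun x := ⟨Complex.I • (x : A), by
    rw [skewAdjoint.mem_iff, star_smul, selfAdjoint.mem_iff.1 x.2, Complex.star_def,
      Complex.conj_I, neg_smul]⟩
  invFun y := ⟨-Complex.I • (y : A), by
    rw [selfAdjoint.mem_iff, star_smul, skewAdjoint.mem_iff.1 y.2, star_neg, Complex.star_def,
      Complex.conj_I, smul_neg, neg_smul, neg_neg]⟩
  map_add' x y := by ext : 1; simp only [AddSubgroup.coe_add, smul_add]
  map_smul' r x := by ext : 1; exact smul_comm _ _ _
  left_inv x := by ext : 1; simp [smul_smul]
  right_inv y := by ext : 1; simp [smul_smul]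

theorem two_mul_finrank_skewAdjoint [FiniteDimensional ℝ A] :
    2 * finrank ℝ (skewAdjoint.submodule ℝ A) = finrank ℝ A := by
  have : FiniteDimensional ℝ (skewAdjoint A) :=
    inferInstanceAs (FiniteDimensional ℝ (skewAdjoint.submodule ℝ A))
  have : FiniteDimensional ℝ (selfAdjoint A) :=
    inferInstanceAs (FiniteDimensional ℝ (selfAdjoint.submodule ℝ A))
  rw [(StarModule.decomposeProdAdjoint ℝ A).finrank_eq, finrank_prod,
    (selfAdjointEquivSkewAdjoint A).finrank_eq, two_mul]
  rfl

end StarModule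

def MutuallyOrthogonal {R : Type*} [Ring R] [Star R] (a b : R) : Prop :=
  a * star b + b * star a = 0

namespace MutuallyOrthogonal

variable {R : Type*} [Ring R] [StarRing R]

theorem of_mul_left {a x y : R} (ha : IsUnit a) (h : MutuallyOrthogonal (a * x) (a * y)) :
    MutuallyOrthogonal x y := by
  have h' : a * (x * star y + y * star x) * star a = 0 := by
    simpa only [MutuallyOrthogonal, star_mul, mul_add, add_mul, mul_assoc] using h
  rwa [ha.star.mul_left_eq_zero, ha.mul_right_eq_zero] at h'

theorem units_inv_mul {u : Rˣ} {a b : R} (h : MutuallyOrthogonal a b) :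
    MutuallyOrthogonal (↑u⁻¹ * a) (↑u⁻¹ * b) :=
  of_mul_left u.isUnit (by simpa only [Units.mul_inv_cancel_left] using h)

theorem one_left_iff {c : R} : MutuallyOrthogonal 1 c ↔ c ∈ skewAdjoint R := by
  rw [MutuallyOrthogonal, skewAdjoint.mem_iff, one_mul, star_one, mul_one, add_eq_zero_iff_eq_neg]

theorem units_inv_mul_mem_skewAdjoint {u : Rˣ} {b : R} (h : MutuallyOrthogonal (u : R) b) :
    ↑u⁻¹ * b ∈ skewAdjoint R :=
  one_left_iff.1 (by simpa only [Units.inv_mul] using h.units_inv_mul (u := u))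

theorem of_mem_span [Algebra ℝ R] [StarModule ℝ R] {ι : Type*} {m x : R} {v : ι → R}
    (h : ∀ i, MutuallyOrthogonal m (v i)) (hx : x ∈ Submodule.span ℝ (Set.range v)) :
    MutuallyOrthogonal m x := by
  induction hx using Submodule.span_induction with
  | mem _ hy => obtain ⟨i, rfl⟩ := hy; exact h i
  | zero => simp [MutuallyOrthogonal]
  | add y z _ _ hy hz =>
    unfold MutuallyOrthogonal at *
    rw [star_add, mul_add, add_mul, add_add_add_comm, hy, hz, add_zero]
  | smul r y _ hy =>
    unfold MutuallyOrthogonal at *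
    rw [star_smul, star_trivial, mul_smul_comm, smul_mul_assoc, ← smul_add, hy, smul_zero]

end MutuallyOrthogonal

theorem LinearIndependent.card_eq_finrank_and_span_eq {K V ι : Type*} [DivisionRing K]
    [AddCommGroup V] [Module K V] [Fintype ι] {v : ι → V} (hv : LinearIndependent K v)
    {S : Submodule K V} [FiniteDimensional K S] (hvS : ∀ i, v i ∈ S)
    (hS : finrank K S ≤ Fintype.card ι) :
    Fintype.card ι = finrank K S ∧ Submodule.span K (Set.range v) = S := by
  have hle : Submodule.span K (Set.range v) ≤ S :=
    Submodule.span_le.2 (Set.range_subset_iff.2 hvS)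
  have hcard : Fintype.card ι = finrank K S :=
    le_antisymm (finrank_span_eq_card hv ▸ Submodule.finrank_mono hle) hS
  exact ⟨hcard, Submodule.eq_of_le_of_finrank_eq hle (by rw [finrank_span_eq_card hv, hcard])⟩

namespace Matrix

variable {m : Type*} [Fintype m]

theorem finrank_skewAdjoint [DecidableEq m] :
    finrank ℝ (skewAdjoint.submodule ℝ (Matrix m m ℂ)) = Fintype.card m ^ 2 := by
  have h := two_mul_finrank_skewAdjoint (Matrix m m ℂ)
  rw [finrank_matrix, Complex.finrank_real_complex] at h
  linarith

theorem commute_of_forall_skewAdjoint {M X : Matrix m m ℂ}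
    (h : ∀ C ∈ skewAdjoint (Matrix m m ℂ), Commute M C) : Commute M X := by
  have hsub : X - star X ∈ skewAdjoint (Matrix m m ℂ) := by
    rw [skewAdjoint.mem_iff, star_sub, star_star, neg_sub]
  have hadd : Complex.I • (X + star X) ∈ skewAdjoint (Matrix m m ℂ) := by
    rw [skewAdjoint.mem_iff, star_smul, star_add, star_star, Complex.star_def, Complex.conj_I,
      neg_smul, add_comm]
  have hX :
      X = (1 / 2 : ℂ) • (X - star X) + (-Complex.I / 2) • Complex.I • (X + star X) := by
    rw [smul_smul, show -Complex.I / 2 * Complex.I = 1 / 2 by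
      rw [neg_div, neg_mul, div_mul_eq_mul_div, Complex.I_mul_I]; ring]
    module
  rw [hX]
  exact ((h _ hsub).smul_right _).add_right ((h _ hadd).smul_right _)

theorem exists_eq_real_smul_one_of_mutuallyOrthogonal [DecidableEq m] {M : Matrix m m ℂ}
    (h : ∀ C ∈ skewAdjoint (Matrix m m ℂ), MutuallyOrthogonal M C) :
    ∃ r : ℝ, M = r • (1 : Matrix m m ℂ) := by
  have hIskew : Complex.I • (1 : Matrix m m ℂ) ∈ skewAdjoint (Matrix m m ℂ) := by
    rw [skewAdjoint.mem_iff, star_smul, star_one, Complex.star_def, Complex.conj_I, neg_smul]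
  have hM : star M = M := by
    have := h _ hIskew
    rw [MutuallyOrthogonal, skewAdjoint.mem_iff.1 hIskew, mul_neg, mul_smul_comm, mul_one,
      smul_mul_assoc, one_mul, neg_add_eq_zero] at this
    exact (smul_right_injective _ Complex.I_ne_zero this).symm
  have hcomm : ∀ C ∈ skewAdjoint (Matrix m m ℂ), Commute M C := fun C hC => by
    have := h C hC
    rwa [MutuallyOrthogonal, skewAdjoint.mem_iff.1 hC, hM, mul_neg, neg_add_eq_zero] at this
  obtain ⟨c, hc⟩ := mem_range_scalar_iff_commute_single'.2 fun i j =>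
    (commute_of_forall_skewAdjoint hcomm).symm
  rw [scalar_apply, ← smul_one_eq_diagonal] at hc
  refine ⟨c.re, ?_⟩
  calc M = (1 / 2 : ℂ) • (M + star M) := by rw [hM]; module
    _ = (c.re : ℂ) • 1 := by
      rw [← hc, star_smul, star_one, Complex.re_eq_add_conj, Complex.star_def]; module
    _ = c.re • 1 := Complex.coe_smul _ _

theorem card_eq_and_span_eq_skewAdjoint_of_mutuallyOrthogonal [DecidableEq m]
    {ι : Type*} [Fintype ι] {u : (Matrix m m ℂ)ˣ} {b : ι → Matrix m m ℂ}
    (hb : LinearIndependent ℝ b)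
    (h : ∀ i, MutuallyOrthogonal (u : Matrix m m ℂ) (b i))
    (hcard : Fintype.card m ^ 2 ≤ Fintype.card ι) :
    Fintype.card ι = Fintype.card m ^ 2 ∧
      Submodule.span ℝ (Set.range fun i => (↑u⁻¹ : Matrix m m ℂ) * b i) =
        skewAdjoint.submodule ℝ (Matrix m m ℂ) := by
  have hb' : LinearIndependent ℝ fun i => (↑u⁻¹ : Matrix m m ℂ) * b i :=
    hb.map' (LinearMap.mulLeft ℝ _) (LinearMap.ker_eq_bot.2 u⁻¹.isUnit.mul_right_injective)
  rw [← finrank_skewAdjoint]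
  exact hb'.card_eq_finrank_and_span_eq (fun i => (h i).units_inv_mul_mem_skewAdjoint)
    (by rwa [finrank_skewAdjoint])

theorem exists_eq_real_smul_of_mutuallyOrthogonal [DecidableEq m] {ι : Type*}
    {u : (Matrix m m ℂ)ˣ} {a : Matrix m m ℂ} {b : ι → Matrix m m ℂ}
    (hspan : Submodule.span ℝ (Set.range fun i => (↑u⁻¹ : Matrix m m ℂ) * b i) =
      skewAdjoint.submodule ℝ (Matrix m m ℂ))
    (h : ∀ i, MutuallyOrthogonal a (b i)) :
    ∃ r : ℝ, a = r • (u : Matrix m m ℂ) := by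
  obtain ⟨r, hr⟩ := exists_eq_real_smul_one_of_mutuallyOrthogonal
    (M := (↑u⁻¹ : Matrix m m ℂ) * a) fun X hX =>
      MutuallyOrthogonal.of_mem_span (fun i => (h i).units_inv_mul) (hspan.ge hX)
  exact ⟨r, by rw [← u.mul_inv_cancel_left a, hr, mul_smul_comm, mul_one]⟩

end Matrix

/-- Suppose invertible matrices in `Mₙ(ℂ)` (all `ℝ`-linearly independent) are
partitioned into `g ≥ 2` groups of sizes `ns i ≥ 1`, matrices in different groups
being pairwise mutually orthogonal. If the groups other than the first contain at
least `n²` matrices altogether, then they contain exactly `n²` and the first group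
has exactly one matrix. -/
theorem stmt_11 {n g : ℕ} (hg : 2 ≤ g) (ns : Fin g → ℕ)
    (hns : ∀ i, 1 ≤ ns i)
    (A : (i : Fin g) → Fin (ns i) → Matrix (Fin n) (Fin n) ℂ)
    (hinv : ∀ i j, IsUnit (A i j))
    (hli : LinearIndependent ℝ (fun p : Σ i : Fin g, Fin (ns i) => A p.1 p.2))
    (horth : ∀ i i' (j : Fin (ns i)) (j' : Fin (ns i')), i ≠ i' →
      A i j * (A i' j')ᴴ + A i' j' * (A i j)ᴴ = 0)
    (hbig : n ^ 2 ≤ ∑ i ∈ Finset.univ.erase (⟨0, by omega⟩ : Fin g), ns i) :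
    (∑ i ∈ Finset.univ.erase (⟨0, by omega⟩ : Fin g), ns i) = n ^ 2 ∧
      ns ⟨0, by omega⟩ = 1 := by
  set z : Fin g := ⟨0, by omega⟩
  have hMO {i i'} (j j') (h : i ≠ i') : MutuallyOrthogonal (A i j) (A i' j') := horth i i' j j' h
  let j₀ : Fin (ns z) := ⟨0, hns z⟩
  obtain ⟨u, hu⟩ := hinv z j₀
  let B (p : Σ i : {i // i ≠ z}, Fin (ns i)) : Matrix (Fin n) (Fin n) ℂ := A p.1 p.2
  have hB : LinearIndependent ℝ B :=
    hli.comp _ (Subtype.val_injective.sigma_map fun _ => Function.injective_id)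
  have hcard :
      Fintype.card (Σ i : {i // i ≠ z}, Fin (ns i)) = ∑ i ∈ Finset.univ.erase z, ns i := by
    simp only [Fintype.card_sigma, Fintype.card_fin]
    exact (Finset.sum_subtype _ (by simp) ns).symm
  obtain ⟨hB_card, hB_span⟩ :=
    card_eq_and_span_eq_skewAdjoint_of_mutuallyOrthogonal (u := u) hB
      (fun p => hu ▸ hMO j₀ p.2 p.1.2.symm) (by rwa [Fintype.card_fin, hcard])
  refine ⟨by rw [← hcard, hB_card, Fintype.card_fin], ?_⟩
  by_contra hne
  let j₁ : Fin (ns z) := ⟨1, by have := hns z; omega⟩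
  obtain ⟨r, hr⟩ :=
    exists_eq_real_smul_of_mutuallyOrthogonal hB_span fun p => hMO j₁ p.2 p.1.2.symm
  have hj : (⟨z, j₀⟩ : Σ i, Fin (ns i)) ≠ ⟨z, j₁⟩ := by simp [j₀, j₁]
  have := (LinearIndepOn.pair_iff _ hj).1 (hli.linearIndepOn _) r (-1)
    (by rw [hr, hu, neg_one_smul, add_neg_cancel])
  norm_num at this
end
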